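/- arXiv:math/0208220 — 2 statements merged into one kernel-verified Lean document; each statement's English description precedes it below -/
import Mathlib

section
/- Let f be a real-valued even function with f̂ ∈ C_c^∞(ℝ) and supp f̂ ⊂ (−a, a), let w ≥ 0 with ∫ w = 1 and ŵ compactly supported, and let H = T^a with 0 < a ≤ 1. Then for all sufficiently large T, the off-diagonal terms vanish exactly and ⟨(N_osc)²⟩_{T,H} = (1/(log T)²) Σ_{n≥2} 2 Λ(n)²/n · f̂(log n/log T)². -/
open MeasureTheory Complex Filter Asymptotics ArithmeticFunction Topology
open scoped Classical

/-- The logarithmic derivative of the Gamma function, `Ψ(s) = Γ'(s)/Γ(s)`. -/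
noncomputable def Psi (s : ℂ) : ℂ := deriv Complex.Gamma s / Complex.Gamma s

/-- `Ω(r) = ½Ψ(¼ + ir/2) + ½Ψ(¼ − ir/2) − log π`. -/
noncomputable def Omega (r : ℂ) : ℂ :=
  (1 / 2) * Psi (1 / 4 + Complex.I * r / 2) + (1 / 2) * Psi (1 / 4 - Complex.I * r / 2)
    - (Real.log Real.pi : ℂ)

/-- The multiplicity of `ρ` as a zero of the Riemann zeta function. -/
noncomputable def zetaZeroMult (ρ : ℂ) : ℕ :=
  if h : AnalyticAt ℂ riemannZeta ρ then (analyticOrderAt riemannZeta ρ).toNat else 0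

/-- The nontrivial zeros of the Riemann zeta function. -/
def zetaNontrivialZeros : Set ℂ := {ρ : ℂ | riemannZeta ρ = 0 ∧ 0 < ρ.re ∧ ρ.re < 1}

/-- The entire function `f(z) = ∫ f̂(u) e^{2πiuz} du` built from a compactly
supported Fourier transform `f̂`. -/
noncomputable def fromHat (fhat : ℝ → ℝ) (z : ℂ) : ℂ :=
  ∫ u : ℝ, (fhat u : ℂ) * Complex.exp (2 * Real.pi * Complex.I * u * z)

/-- The Fourier transform `ĝ(u) = ∫ g(x) e^{−2πixu} dx`. -/
noncomputable def FT (g : ℝ → ℂ) (u : ℝ) : ℂ :=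
  ∫ x : ℝ, g x * Complex.exp (-(2 * Real.pi) * Complex.I * x * u)

/-- The averaging operator `⟨W⟩_{T,H} = ∫ W(τ) w((τ − T)/H) dτ/H`. -/
noncomputable def avg (w : ℝ → ℝ) (T H : ℝ) (W : ℝ → ℂ) : ℂ :=
  ∫ τ : ℝ, W τ * ((w ((τ - T) / H) : ℝ) : ℂ) / (H : ℂ)

/-- The linear statistic `N_f(τ) = Σ_j f((log T/2π)(γ_j − τ))`, summed over the
nontrivial zeros `ρ = 1/2 + iγ` of `ζ`, counted with multiplicity. -/
noncomputable def Nf (fhat : ℝ → ℝ) (T τ : ℝ) : ℂ :=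
  ∑' ρ : zetaNontrivialZeros,
    (zetaZeroMult ρ : ℂ) *
      fromHat fhat (((Real.log T / (2 * Real.pi) : ℝ) : ℂ) *
        (-Complex.I * ((ρ : ℂ) - 1 / 2) - (τ : ℂ)))

/-- The smooth part `N̄_f(τ)` of the linear statistic. -/
noncomputable def Nbar (fhat : ℝ → ℝ) (T τ : ℝ) : ℂ :=
  (1 / (2 * Real.pi) : ℂ) *
      (∫ r : ℝ, fromHat fhat (((Real.log T / (2 * Real.pi) : ℝ) : ℂ) * ((r : ℂ) - τ)) * Omega r)
    + fromHat fhat (((Real.log T / (2 * Real.pi) : ℝ) : ℂ) * (Complex.I / 2 - τ))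
    + fromHat fhat (((Real.log T / (2 * Real.pi) : ℝ) : ℂ) * (-Complex.I / 2 - τ))

/-- The oscillatory part
`N_osc(τ) = −(1/log T) Σ_{n≥2} (Λ(n)/√n) f̂(log n/log T)(e^{iτ log n} + e^{−iτ log n})`.
(The von Mangoldt function vanishes at `n = 0, 1`, so the sum may be taken over all `n`.) -/
noncomputable def Nosc (fhat : ℝ → ℝ) (T τ : ℝ) : ℂ :=
  -(1 / Real.log T : ℂ) * ∑' n : ℕ,
    ((Λ n / Real.sqrt n : ℝ) : ℂ) * ((fhat (Real.log n / Real.log T) : ℝ) : ℂ) *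
      (Complex.exp (Complex.I * τ * Real.log n) + Complex.exp (-Complex.I * τ * Real.log n))
section SecondMomentHelpers

lemma expand_mul (τ a b : ℝ) :
    (Complex.exp (Complex.I * τ * a) + Complex.exp (-Complex.I * τ * a)) *
      (Complex.exp (Complex.I * τ * b) + Complex.exp (-Complex.I * τ * b))
    = Complex.exp (Complex.I * τ * ((a + b : ℝ) : ℂ))
      + Complex.exp (Complex.I * τ * ((a - b : ℝ) : ℂ))
      + Complex.exp (Complex.I * τ * ((b - a : ℝ) : ℂ))
      + Complex.exp (Complex.I * τ * ((-(a + b) : ℝ) : ℂ)) := by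
  have h : ∀ u v : ℂ, Complex.exp u * Complex.exp v = Complex.exp (u + v) :=
    fun u v => (Complex.exp_add u v).symm
  push_cast
  rw [add_mul, mul_add, mul_add, h, h, h, h]
  rw [show Complex.I * ↑τ * ↑a + Complex.I * ↑τ * ↑b = Complex.I * ↑τ * (↑a + ↑b) from by ring,
      show Complex.I * ↑τ * ↑a + -Complex.I * ↑τ * ↑b = Complex.I * ↑τ * (↑a - ↑b) from by ring,
      show -Complex.I * ↑τ * ↑a + Complex.I * ↑τ * ↑b = Complex.I * ↑τ * (↑b - ↑a) from by ring,
      show -Complex.I * ↑τ * ↑a + -Complex.I * ↑τ * ↑b = Complex.I * ↑τ * -(↑a + ↑b) from by ring]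
  ring

lemma g_integrable (w : ℝ → ℝ) (hw : Integrable w) (T H θ : ℝ) (hH : H ≠ 0) :
    Integrable (fun τ : ℝ => Complex.exp (Complex.I * τ * θ) * ((w ((τ - T)/H) : ℝ) : ℂ) / (H:ℂ)) := by
  have h1 : Integrable (fun τ : ℝ => w ((τ - T)/H)) := by
    simpa using (hw.comp_div hH).comp_sub_right T
  have h3 : Integrable (fun τ : ℝ => Complex.exp (Complex.I * τ * θ) * ((w ((τ - T)/H) : ℝ) : ℂ)) := by
    apply h1.ofReal.bdd_mul (c := 1)
    · exact (Continuous.aestronglyMeasurable (by continuity))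
    · refine Filter.Eventually.of_forall fun τ => ?_
      rw [show Complex.I * τ * θ = ((τ * θ : ℝ) : ℂ) * Complex.I from by push_cast; ring]
      simp [Complex.norm_exp]
  simpa [div_eq_mul_inv] using h3.mul_const ((H:ℂ)⁻¹)

lemma J_eq (w : ℝ → ℝ) (T H : ℝ) (hH : 0 < H) (θ : ℝ) :
    (∫ τ : ℝ, Complex.exp (Complex.I * τ * θ) * ((w ((τ - T)/H) : ℝ) : ℂ) / (H:ℂ))
      = Complex.exp (Complex.I * T * θ) * FT (fun x => (w x : ℂ)) (-(H * θ) / (2 * Real.pi)) := by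
  have hHne : (H:ℂ) ≠ 0 := by exact_mod_cast hH.ne'
  have hpi : (Real.pi : ℂ) ≠ 0 := by exact_mod_cast Real.pi_ne_zero
  set F : ℝ → ℂ := fun s => Complex.exp (Complex.I * ((T + H * s : ℝ) : ℂ) * θ) * ((w s : ℝ) : ℂ) / (H:ℂ) with hF
  have step1 : (∫ τ : ℝ, Complex.exp (Complex.I * τ * θ) * ((w ((τ - T)/H) : ℝ) : ℂ) / (H:ℂ))
      = ∫ τ : ℝ, F ((τ - T)/H) := by
    refine integral_congr_ae (Filter.Eventually.of_forall fun τ => ?_)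
    have h : (T + H * ((τ - T)/H) : ℝ) = τ := by field_simp; ring
    simp only [hF, h]
  have step2 : (∫ τ : ℝ, F ((τ - T)/H)) = ∫ x : ℝ, F (x / H) :=
    (integral_sub_right_eq_self (fun x => F (x / H)) T)
  rw [step1, step2, MeasureTheory.Measure.integral_comp_div F H, abs_of_pos hH, FT]
  rw [← integral_const_mul, ← MeasureTheory.integral_smul]
  refine integral_congr_ae (Filter.Eventually.of_forall fun s => ?_)
  simp only [hF, real_smul]
  rw [show Complex.I * ((T + H * s : ℝ) : ℂ) * θ
      = Complex.I * (T:ℂ) * θ + -(2 * (Real.pi:ℂ)) * Complex.I * s * ((-(H * θ) / (2 * Real.pi) : ℝ) : ℂ) from by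
    push_cast; field_simp, Complex.exp_add]
  field_simp

lemma sq_structure {ι : Type*} (S : Finset ι) (d : ℂ) (t : ι → ℂ) (W : ℂ) :
    (d * ∑ n ∈ S, t n)^2 * W = ∑ n ∈ S, ∑ m ∈ S, d^2 * (t n * t m) * W := by
  rw [mul_pow, sq (∑ n ∈ S, t n), Finset.sum_mul_sum]
  simp only [Finset.mul_sum, Finset.sum_mul, mul_assoc]

end SecondMomentHelpers

/-- For sufficiently large `T` the off-diagonal terms in the second moment vanish exactly:
`⟨(N_osc)²⟩_{T,H} = (1/(log T)²) Σ_{n≥2} 2Λ(n)²/n · f̂(log n/log T)²`. -/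
theorem second_moment_diagonal
    (fhat : ℝ → ℝ) (hf_smooth : ContDiff ℝ (⊤ : ℕ∞) fhat) (hf_supp : HasCompactSupport fhat)
    (hf_even : ∀ x, fhat (-x) = fhat x)
    (w : ℝ → ℝ) (hw_nonneg : ∀ x, 0 ≤ w x) (hw_int : ∫ x : ℝ, w x = 1)
    (hw_hat : HasCompactSupport (FT fun x => (w x : ℂ)))
    (a : ℝ) (ha : 0 < a) (ha' : a ≤ 1)
    (hf_supp' : tsupport fhat ⊆ Set.Ioo (-a) a) :
    ∃ T₀ : ℝ, ∀ T : ℝ, T₀ ≤ T →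
      avg w T (T ^ a) (fun τ => (Nosc fhat T τ) ^ 2)
        = (((1 / (Real.log T) ^ 2) * ∑' n : ℕ,
            2 * (Λ n) ^ 2 / n * fhat (Real.log n / Real.log T) ^ 2 : ℝ) : ℂ) := by
    -- `w` is integrable since its integral is nonzero
  have hw_integrable : Integrable w := by
    by_contra hcon
    rw [integral_undef hcon] at hw_int
    exact one_ne_zero hw_int.symm
  -- a bound `a' < a` for the support of `fhat`
  obtain ⟨x₀, hx₀K, hx₀max⟩ : ∃ x₀ ∈ insert (0:ℝ) (tsupport fhat),
      ∀ y ∈ insert (0:ℝ) (tsupport fhat), |y| ≤ |x₀| := by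
    obtain ⟨x₀, hx₀, hmax⟩ := (hf_supp.insert 0).exists_isMaxOn
      (Set.insert_nonempty _ _) (continuous_abs.continuousOn)
    exact ⟨x₀, hx₀, fun y hy => hmax hy⟩
  set a' := |x₀| with ha'def
  have ha'0 : 0 ≤ a' := abs_nonneg _
  have hKsub : insert (0:ℝ) (tsupport fhat) ⊆ Set.Ioo (-a) a :=
    Set.insert_subset ⟨by linarith, ha⟩ hf_supp'
  have ha'a : a' < a := by
    have := hKsub hx₀K
    exact abs_lt.mpr ⟨this.1, this.2⟩
  have hfhat_zero : ∀ x : ℝ, a' < |x| → fhat x = 0 := by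
    intro x hx
    refine image_eq_zero_of_notMem_tsupport fun hmem => ?_
    exact absurd (hx₀max x (Set.mem_insert_of_mem _ hmem)) (not_le.mpr hx)
  -- a radius `R` for the support of `ŵ`
  obtain ⟨R, hR⟩ := hw_hat.isBounded.subset_closedBall 0
  have hFT0 : ∀ u : ℝ, R < |u| → FT (fun x => (w x : ℂ)) u = 0 := by
    intro u hu
    refine image_eq_zero_of_notMem_tsupport fun hmem => ?_
    have := hR hmem
    rw [Metric.mem_closedBall, Real.dist_eq, sub_zero] at this
    exact absurd this (not_le.mpr hu)
  have hlog2 : 0 < Real.log 2 := Real.log_pos (by norm_num)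
  -- choice of `T₀`
  have hgapa : 0 < a - a' := by linarith
  have hevent : ∀ᶠ T : ℝ in atTop,
      (3 ≤ T ∧ 2*Real.pi*R < T^a * Real.log 2) ∧ 2*Real.pi*R < T^(a - a') := by
    have e1 : ∀ᶠ T : ℝ in atTop, (3:ℝ) ≤ T := eventually_ge_atTop 3
    have e2 : ∀ᶠ T : ℝ in atTop, 2*Real.pi*R / Real.log 2 < T^a :=
      (tendsto_rpow_atTop ha).eventually_gt_atTop _
    have e3 : ∀ᶠ T : ℝ in atTop, 2*Real.pi*R < T^(a-a') :=
      (tendsto_rpow_atTop hgapa).eventually_gt_atTop _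
    filter_upwards [e1, e2, e3] with T h1 h2 h3
    exact ⟨⟨h1, by rwa [div_lt_iff₀ hlog2] at h2⟩, h3⟩
  obtain ⟨T₀, hT₀⟩ := eventually_atTop.mp hevent
  refine ⟨T₀, fun T hT => ?_⟩
  obtain ⟨⟨hT3, hC2⟩, hC3⟩ := hT₀ T hT
  have hTpos : (0:ℝ) < T := by linarith
  set L := Real.log T with hL
  set H := T ^ a with hHdef
  have hHpos : 0 < H := Real.rpow_pos_of_pos hTpos a
  have hHne : H ≠ 0 := hHpos.ne'
  have hL1 : 1 < L := by
    have h3 : (1:ℝ) < Real.log 3 := by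
      rw [show (1:ℝ) = Real.log (Real.exp 1) from (Real.log_exp 1).symm]
      exact Real.log_lt_log (Real.exp_pos 1)
        (lt_of_le_of_lt Real.exp_one_lt_d9.le (by norm_num))
    calc (1:ℝ) < Real.log 3 := h3
    _ ≤ L := Real.log_le_log (by norm_num) hT3
  have hLpos : 0 < L := by linarith
  have hLne : (L:ℂ) ≠ 0 := by exact_mod_cast hLpos.ne'
  -- finite support
  set S : Finset ℕ := Finset.range (Nat.floor T + 1) with hS
  set c : ℕ → ℂ := fun n => ((Λ n / Real.sqrt n : ℝ) : ℂ) * ((fhat (Real.log n / L) : ℝ) : ℂ) with hc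
  have hzero : ∀ n : ℕ, n ∉ S → fhat (Real.log n / L) = 0 := by
    intro n hn
    apply hfhat_zero
    have hfl : Nat.floor T + 1 ≤ n := by
      simpa [hS, Finset.mem_range, not_lt] using hn
    have hn' : T < (n:ℝ) := by
      calc T < ((Nat.floor T + 1 : ℕ) : ℝ) := by exact_mod_cast Nat.lt_floor_add_one T
      _ ≤ (n:ℝ) := by exact_mod_cast hfl
    have hlog : L < Real.log n := Real.log_lt_log (by linarith) hn'
    have h1 : 1 < Real.log n / L := (one_lt_div hLpos).mpr hlog
    calc a' < Real.log n / L := by linarith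
    _ ≤ |Real.log n / L| := le_abs_self _
  have hNosc : ∀ τ : ℝ, Nosc fhat T τ = -(1/(L:ℂ)) * ∑ n ∈ S,
      c n * (Complex.exp (Complex.I * τ * Real.log n)
        + Complex.exp (-Complex.I * τ * Real.log n)) := by
    intro τ
    rw [Nosc, ← hL]
    congr 1
    refine tsum_eq_sum fun n hn => ?_
    simp [hc, hzero n hn]
  -- the basic oscillatory integrals
  set g : ℝ → ℝ → ℂ :=
    fun θ τ => Complex.exp (Complex.I * τ * θ) * ((w ((τ - T)/H) : ℝ) : ℂ) / (H:ℂ) with hg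
  have hgint : ∀ θ : ℝ, Integrable (g θ) :=
    fun θ => g_integrable w hw_integrable T H θ hHne
  have hadd2 : ∀ θ₁ θ₂ : ℝ, Integrable (fun τ => g θ₁ τ + g θ₂ τ) :=
    fun θ₁ θ₂ => (hgint θ₁).add (hgint θ₂)
  have hadd3 : ∀ θ₁ θ₂ θ₃ : ℝ, Integrable (fun τ => g θ₁ τ + g θ₂ τ + g θ₃ τ) :=
    fun θ₁ θ₂ θ₃ => (hadd2 θ₁ θ₂).add (hgint θ₃)
  set J : ℝ → ℂ := fun θ => ∫ τ : ℝ, g θ τ with hJdef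
  have hJ0 : J 0 = 1 := by
    rw [hJdef]
    simp only [hg]
    rw [J_eq w T H hHpos 0]
    have hFT : FT (fun x => (w x : ℂ)) (-(H * 0) / (2 * Real.pi)) = 1 := by
      rw [show -(H * 0) / (2 * Real.pi) = (0:ℝ) by ring, FT]
      simp only [Complex.ofReal_zero, mul_zero, Complex.exp_zero, mul_one]
      rw [show (∫ x : ℝ, ((w x : ℝ) : ℂ)) = ((∫ x : ℝ, w x : ℝ) : ℂ) from integral_ofReal]
      rw [hw_int]; norm_num
    rw [hFT]
    simp
  have hJvanish : ∀ θ : ℝ, 2*Real.pi*R < H * |θ| → J θ = 0 := by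
    intro θ hθ
    rw [hJdef]
    simp only [hg]
    rw [J_eq w T H hHpos θ, hFT0, mul_zero]
    have hpi2 : (0:ℝ) < 2*Real.pi := by positivity
    rw [abs_div, abs_neg, abs_mul, abs_of_pos hHpos, abs_of_pos hpi2, lt_div_iff₀ hpi2]
    nlinarith [hθ]
  -- the main expansion
  have hmain : avg w T H (fun τ => (Nosc fhat T τ)^2)
      = ∑ n ∈ S, ∑ m ∈ S, (-(1/(L:ℂ)))^2 * (c n * c m) *
          (J (Real.log n + Real.log m) + J (Real.log n - Real.log m)
            + J (Real.log m - Real.log n) + J (-(Real.log n + Real.log m))) := by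
    have hpt : ∀ τ : ℝ, (Nosc fhat T τ)^2 * ((w ((τ - T)/H) : ℝ) : ℂ) / (H:ℂ)
        = ∑ n ∈ S, ∑ m ∈ S, (-(1/(L:ℂ)))^2 * (c n * c m) *
            (g (Real.log n + Real.log m) τ + g (Real.log n - Real.log m) τ
              + g (Real.log m - Real.log n) τ + g (-(Real.log n + Real.log m)) τ) := by
      intro τ
      rw [hNosc τ, mul_div_assoc,
        sq_structure S (-(1/(L:ℂ))) _ (((w ((τ - T)/H) : ℝ) : ℂ) / (H:ℂ))]
      refine Finset.sum_congr rfl fun n _ => Finset.sum_congr rfl fun m _ => ?_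
      have e := expand_mul τ (Real.log n) (Real.log m)
      simp only [hg]
      linear_combination ((-(1/(L:ℂ)))^2 * (c n * c m) *
        (((w ((τ - T)/H) : ℝ) : ℂ) / (H:ℂ))) * e
    have hint4 : ∀ n m : ℕ, Integrable (fun τ =>
        (-(1/(L:ℂ)))^2 * (c n * c m) *
          (g (Real.log n + Real.log m) τ + g (Real.log n - Real.log m) τ
            + g (Real.log m - Real.log n) τ + g (-(Real.log n + Real.log m)) τ)) :=
      fun n m => ((((hgint _).add (hgint _)).add (hgint _)).add (hgint _)).const_mul _
    calc avg w T H (fun τ => (Nosc fhat T τ)^2)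
        = ∫ τ : ℝ, ∑ n ∈ S, ∑ m ∈ S, (-(1/(L:ℂ)))^2 * (c n * c m) *
            (g (Real.log n + Real.log m) τ + g (Real.log n - Real.log m) τ
              + g (Real.log m - Real.log n) τ + g (-(Real.log n + Real.log m)) τ) := by
          rw [avg]
          exact integral_congr_ae (Filter.Eventually.of_forall fun τ => hpt τ)
    _ = _ := by
          rw [integral_finset_sum S (fun n _ => integrable_finset_sum S (fun m _ => hint4 n m))]
          refine Finset.sum_congr rfl fun n _ => ?_
          rw [integral_finset_sum S (fun m _ => hint4 n m)]
          refine Finset.sum_congr rfl fun m _ => ?_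
          rw [integral_const_mul,
            integral_add (hadd3 _ _ _) (hgint _),
            integral_add (hadd2 _ _) (hgint _),
            integral_add (hgint _) (hgint _)]
  -- facts about nonvanishing coefficients
  have hfacts : ∀ n : ℕ, c n ≠ 0 → 2 ≤ n ∧ Real.log 2 ≤ Real.log n ∧ (n:ℝ) ≤ T ^ a' := by
    intro n hcn
    have hΛ : Λ n ≠ 0 := by
      intro h0; apply hcn; simp [hc, h0]
    have hfh : fhat (Real.log n / L) ≠ 0 := by
      intro h0; apply hcn; simp [hc, h0]
    have h2n : 2 ≤ n := (ArithmeticFunction.vonMangoldt_ne_zero_iff.mp hΛ).two_le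
    have h2n' : (2:ℝ) ≤ (n:ℝ) := by exact_mod_cast h2n
    have hlogn : Real.log 2 ≤ Real.log n := Real.log_le_log (by norm_num) h2n'
    have habs : |Real.log n / L| ≤ a' := by
      by_contra hcon
      exact hfh (hfhat_zero _ (not_le.mp hcon))
    have hlogle : Real.log n ≤ a' * L := by
      have h1 : Real.log n / L ≤ a' := (le_abs_self _).trans habs
      calc Real.log n = (Real.log n / L) * L := by field_simp
      _ ≤ a' * L := mul_le_mul_of_nonneg_right h1 hLpos.le
    refine ⟨h2n, hlogn, ?_⟩
    have hnpos : (0:ℝ) < (n:ℝ) := by linarith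
    rw [← Real.log_le_log_iff hnpos (Real.rpow_pos_of_pos hTpos a'),
      Real.log_rpow hTpos]
    linarith [hlogle]
  -- off-diagonal gap
  have hkey : ∀ p q : ℕ, 2 ≤ q → q < p → (p:ℝ) ≤ T^a' →
      2*Real.pi*R < H * (Real.log p - Real.log q) := by
    intro p q h2q hqp hpT
    have hqpos : (0:ℝ) < (q:ℝ) := by exact_mod_cast lt_of_lt_of_le two_pos h2q
    have hppos : (0:ℝ) < (p:ℝ) := by exact_mod_cast lt_trans (lt_of_lt_of_le two_pos h2q) hqp
    have hlb : 1/(p:ℝ) ≤ Real.log p - Real.log q := by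
      have h1 : Real.log ((q:ℝ)/(p:ℝ)) ≤ (q:ℝ)/(p:ℝ) - 1 :=
        Real.log_le_sub_one_of_pos (by positivity)
      rw [Real.log_div hqpos.ne' hppos.ne'] at h1
      have h2 : (1:ℝ) ≤ (p:ℝ) - (q:ℝ) := by
        have : (q:ℝ) + 1 ≤ (p:ℝ) := by exact_mod_cast Nat.succ_le_of_lt hqp
        linarith
      have h3 : 1/(p:ℝ) ≤ ((p:ℝ) - (q:ℝ))/(p:ℝ) :=
        (div_le_div_iff_of_pos_right hppos).mpr h2
      have h4 : 1 - (q:ℝ)/(p:ℝ) = ((p:ℝ) - (q:ℝ))/(p:ℝ) := by field_simp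
      linarith
    have hub : 1/(T^a') ≤ 1/(p:ℝ) := by
      apply one_div_le_one_div_of_le hppos hpT
    have h5 : T^(a-a') ≤ H * (Real.log p - Real.log q) := by
      have h4 : T^(a-a') = H * (1/(T^a')) := by
        rw [Real.rpow_sub hTpos, hHdef]
        field_simp
      rw [h4]
      exact mul_le_mul_of_nonneg_left (le_trans hub hlb) hHpos.le
    linarith [hC3]
  have hgapJ : ∀ n m : ℕ, c n ≠ 0 → c m ≠ 0 → n ≠ m →
      J (Real.log n - Real.log m) = 0 := by
    intro n m hn hm hnm
    apply hJvanish
    obtain ⟨h2n, _, hnT⟩ := hfacts n hn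
    obtain ⟨h2m, _, hmT⟩ := hfacts m hm
    rcases lt_or_gt_of_ne hnm with h | h
    · have hlt : Real.log n < Real.log m :=
        Real.log_lt_log (by exact_mod_cast lt_of_lt_of_le two_pos h2n) (by exact_mod_cast h)
      rw [abs_sub_comm, abs_of_pos (sub_pos.mpr hlt)]
      exact hkey m n h2n h hmT
    · have hlt : Real.log m < Real.log n :=
        Real.log_lt_log (by exact_mod_cast lt_of_lt_of_le two_pos h2m) (by exact_mod_cast h)
      rw [abs_of_pos (sub_pos.mpr hlt)]
      exact hkey n m h2m h hnT
  have hplus : ∀ n m : ℕ, c n ≠ 0 → c m ≠ 0 →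
      J (Real.log n + Real.log m) = 0 ∧ J (-(Real.log n + Real.log m)) = 0 := by
    intro n m hn hm
    obtain ⟨h2n, hln, _⟩ := hfacts n hn
    obtain ⟨h2m, hlm, _⟩ := hfacts m hm
    have hpos : 0 < Real.log n + Real.log m := by linarith
    have hbig : 2*Real.pi*R < H * |Real.log n + Real.log m| := by
      rw [abs_of_pos hpos]
      calc 2*Real.pi*R < H * Real.log 2 := hC2
      _ ≤ H * (Real.log n + Real.log m) :=
          mul_le_mul_of_nonneg_left (by linarith) hHpos.le
    exact ⟨hJvanish _ hbig, hJvanish _ (by rwa [abs_neg])⟩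
  -- evaluate the double sum
  have hdouble : ∑ n ∈ S, ∑ m ∈ S, (-(1/(L:ℂ)))^2 * (c n * c m) *
        (J (Real.log n + Real.log m) + J (Real.log n - Real.log m)
          + J (Real.log m - Real.log n) + J (-(Real.log n + Real.log m)))
      = ∑ n ∈ S, (-(1/(L:ℂ)))^2 * (c n * c n) * 2 := by
    refine Finset.sum_congr rfl fun n hn => ?_
    rw [Finset.sum_eq_single_of_mem n hn]
    · by_cases hcn : c n = 0
      · simp [hcn]
      · obtain ⟨hp, hp'⟩ := hplus n n hcn hcn
        rw [hp, hp', sub_self, hJ0]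
        ring
    · intro m hm hmn
      by_cases h0 : c n = 0
      · simp [h0]
      by_cases h1 : c m = 0
      · simp [h1]
      obtain ⟨hp, hp'⟩ := hplus n m h0 h1
      rw [hp, hp', hgapJ n m h0 h1 (fun h => hmn h.symm), hgapJ m n h1 h0 hmn]
      ring
  rw [hmain, hdouble]
  -- identify with the right-hand side
  have hRHSsum : ∑' n : ℕ, 2*(Λ n)^2/(n:ℝ) * fhat (Real.log n / L)^2
      = ∑ n ∈ S, 2*(Λ n)^2/(n:ℝ) * fhat (Real.log n / L)^2 := by
    refine tsum_eq_sum fun n hn => ?_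
    rw [hzero n hn]
    ring
  rw [hRHSsum]
  push_cast
  rw [Finset.mul_sum]
  refine Finset.sum_congr rfl fun n hn => ?_
  simp only [hc]
  push_cast
  rcases Nat.eq_zero_or_pos n with h0 | h0
  · subst h0
    simp
  · have hs2 : ((Real.sqrt (n:ℝ) : ℝ) : ℂ)^2 = ((n:ℕ) : ℂ) := by
      rw [← Complex.ofReal_pow, Real.sq_sqrt (Nat.cast_nonneg n)]
      push_cast
      ring
    have hnne : ((n:ℕ):ℂ) ≠ 0 := Nat.cast_ne_zero.mpr h0.ne'
    have hsne : ((Real.sqrt (n:ℝ) : ℝ) : ℂ) ≠ 0 := fun h => hnne (by rw [← hs2, h]; ring)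
    field_simp
    rw [← hs2]
    ring
end

section
/- Let f̂ ∈ C_c^∞(ℝ) be even with supp f̂ ⊂ (−α, α), let w ≥ 0 with ∫ w = 1 and ŵ compactly supported, let H = T^a with 0 < a ≤ 1, and let m ≥ 2 be an integer with m < 2a/α. Then for all sufficiently large T, ⟨(N_osc)^m⟩_{T,H} = Σ_{E ⊆ {1,...,m}} J(E), where J(E) = (−1/log T)^m Σ over tuples (n₁,...,n_m) of integers n_j ≥ 2 satisfying ∏_{j∈E} n_j = ∏_{j∉E} n_j, of ∏_{j=1}^m (Λ(n_j)/√n_j) f̂(log n_j / log T). -/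
open MeasureTheory Complex Filter Asymptotics ArithmeticFunction Topology
open scoped Classical

/-- `J(E) = (−1/log T)^m Σ_{n₁,…,n_m ≥ 2, ∏_{j∈E} n_j = ∏_{j∉E} n_j} ∏_j (Λ(n_j)/√n_j) f̂(log n_j/log T)`. -/
noncomputable def J (fhat : ℝ → ℝ) (T : ℝ) (m : ℕ) (E : Finset (Fin m)) : ℝ :=
  (-(1 / Real.log T)) ^ m *
    ∑' n : {n : Fin m → ℕ // (∀ j, 2 ≤ n j) ∧ ∏ j ∈ E, n j = ∏ j ∈ Eᶜ, n j},
      ∏ j : Fin m, Λ (n.1 j) / Real.sqrt (n.1 j) * fhat (Real.log (n.1 j) / Real.log T)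

lemma avg_exp_eq (w : ℝ → ℝ) (T H θ : ℝ) (hH : 0 < H) :
    ∫ τ : ℝ, Complex.exp (Complex.I * τ * θ) * ((w ((τ - T) / H) : ℝ) : ℂ) / H
      = Complex.exp (Complex.I * T * θ) *
          FT (fun x => (w x : ℂ)) (-(H * θ) / (2 * Real.pi)) := by
  have hH' : (H : ℂ) ≠ 0 := by exact_mod_cast hH.ne'
  set u : ℝ := -(H * θ) / (2 * Real.pi) with hu
  set G : ℝ → ℂ := fun y => Complex.exp (Complex.I * (T + H * y) * θ) * ((w y : ℝ) : ℂ) with hG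
  have h1 : ∀ τ : ℝ, Complex.exp (Complex.I * τ * θ) * ((w ((τ - T) / H) : ℝ) : ℂ) / H
      = G ((τ - T) / H) / H := by
    intro τ
    simp only [hG]
    congr 3
    push_cast
    field_simp
    ring
  calc ∫ τ : ℝ, Complex.exp (Complex.I * τ * θ) * ((w ((τ - T) / H) : ℝ) : ℂ) / H
      = ∫ τ : ℝ, G ((τ - T) / H) / H := by simp_rw [h1]
    _ = (∫ τ : ℝ, G ((τ - T) / H)) / H := integral_div _ _
    _ = (∫ y : ℝ, G (y / H)) / H := by
        rw [show (fun τ : ℝ => G ((τ - T) / H)) = fun τ : ℝ => (fun y => G (y / H)) (τ - T) from rfl,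
          integral_sub_right_eq_self (fun y => G (y / H)) T]
    _ = (|H| • ∫ y : ℝ, G y) / H := by rw [MeasureTheory.Measure.integral_comp_div G H]
    _ = ∫ y : ℝ, G y := by
        rw [abs_of_pos hH, Complex.real_smul, mul_comm, mul_div_assoc, div_self hH', mul_one]
    _ = ∫ y : ℝ, Complex.exp (Complex.I * T * θ) *
          ((w y : ℝ) : ℂ) * Complex.exp (-(2 * Real.pi) * Complex.I * y * u) := by
        congr 1; funext y
        have he : (Complex.I * (T + H * y) * θ : ℂ)
            = Complex.I * T * θ + -(2 * Real.pi) * Complex.I * y * (u : ℝ) := by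
          rw [hu]; push_cast
          have : ((Real.pi : ℂ)) ≠ 0 := Complex.ofReal_ne_zero.mpr Real.pi_ne_zero
          field_simp
        rw [hG]
        simp only []
        rw [he, Complex.exp_add]
        ring
    _ = Complex.exp (Complex.I * T * θ) * FT (fun x => (w x : ℂ)) u := by
        rw [FT]
        rw [← MeasureTheory.integral_const_mul]
        congr 1; funext y; ring

lemma log_gap_aux (Q P : ℕ) (hQ : 1 ≤ Q) (hQP : Q < P) :
    1 / (2 * (Q : ℝ)) ≤ Real.log P - Real.log Q := by
  have hQ0 : (0:ℝ) < Q := by exact_mod_cast hQ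
  have h1 : Real.log (Q + 1) - Real.log Q ≤ Real.log P - Real.log Q := by
    have : ((Q:ℝ) + 1) ≤ P := by exact_mod_cast hQP
    have := Real.log_le_log (by positivity) this
    linarith
  have h2 : Real.log ((Q:ℝ) + 1) - Real.log Q = Real.log (((Q:ℝ) + 1) / Q) := by
    rw [Real.log_div (by positivity) (by positivity)]
  have h3 : (1:ℝ) / ((Q:ℝ) + 1) ≤ Real.log (((Q:ℝ) + 1) / Q) := by
    have hx : (0:ℝ) < (Q:ℝ) / ((Q:ℝ) + 1) := by positivity
    have := Real.log_le_sub_one_of_pos hx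
    have hlog : Real.log ((Q:ℝ) / ((Q:ℝ)+1)) = - Real.log (((Q:ℝ)+1) / Q) := by
      rw [← Real.log_inv]
      congr 1
      field_simp
    rw [hlog] at this
    have : (1:ℝ) - (Q:ℝ)/((Q:ℝ)+1) ≤ Real.log (((Q:ℝ)+1)/Q) := by linarith
    have heq : (1:ℝ) - (Q:ℝ)/((Q:ℝ)+1) = 1 / ((Q:ℝ)+1) := by field_simp; ring
    linarith [heq ▸ this]
  have h4 : (1:ℝ) / (2*(Q:ℝ)) ≤ 1 / ((Q:ℝ)+1) := by
    apply div_le_div_of_nonneg_left (by norm_num) (by positivity)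
    have : (1:ℝ) ≤ Q := by exact_mod_cast hQ
    linarith
  push_cast at h2 ⊢
  linarith

lemma log_gap (P Q : ℕ) (hP : 1 ≤ P) (hQ : 1 ≤ Q) (hne : P ≠ Q) :
    1 / (2 * (min P Q : ℝ)) ≤ |Real.log P - Real.log Q| := by
  rcases lt_or_gt_of_ne hne with h | h
  · rw [min_eq_left (by exact_mod_cast h.le : (P:ℝ) ≤ (Q:ℝ)), abs_sub_comm]
    have := log_gap_aux P Q hP h
    calc (1:ℝ)/(2*(P:ℝ)) ≤ Real.log Q - Real.log P := this
      _ ≤ |Real.log Q - Real.log P| := le_abs_self _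
  · rw [min_eq_right (by exact_mod_cast h.le : (Q:ℝ) ≤ (P:ℝ))]
    have := log_gap_aux Q P hQ h
    calc (1:ℝ)/(2*(Q:ℝ)) ≤ Real.log P - Real.log Q := this
      _ ≤ |Real.log P - Real.log Q| := le_abs_self _
lemma exists_alpha' (fhat : ℝ → ℝ) (α : ℝ) (hα : 0 < α) (hf_supp : HasCompactSupport fhat)
    (hf_supp' : tsupport fhat ⊆ Set.Ioo (-α) α) :
    ∃ α' : ℝ, 0 < α' ∧ α' < α ∧ ∀ u : ℝ, α' ≤ |u| → fhat u = 0 := by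
  by_cases hK : (tsupport fhat).Nonempty
  · have hcomp : IsCompact (tsupport fhat) := hf_supp
    obtain ⟨x₀, hx₀K, hx₀max⟩ := hcomp.exists_isMaxOn hK (continuous_abs.continuousOn)
    have hx₀lt : |x₀| < α := by
      have := hf_supp' hx₀K
      rw [Set.mem_Ioo] at this
      rw [abs_lt]; exact ⟨by linarith [this.1], this.2⟩
    refine ⟨(|x₀| + α) / 2, by positivity, by linarith, fun u hu => ?_⟩
    apply image_eq_zero_of_notMem_tsupport
    intro huK
    have := hx₀max huK
    simp only [Set.mem_setOf_eq] at this
    linarith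
  · refine ⟨α/2, by positivity, by linarith, fun u _ => ?_⟩
    apply image_eq_zero_of_notMem_tsupport
    intro hu
    exact hK ⟨u, hu⟩

lemma FT_zero (w : ℝ → ℝ) (hw_int : ∫ x : ℝ, w x = 1) :
    FT (fun x => (w x : ℂ)) 0 = 1 := by
  rw [FT]
  simp only [Complex.ofReal_zero, mul_zero, Complex.exp_zero, mul_one]
  calc ∫ x : ℝ, ((w x : ℝ) : ℂ) = ∫ x : ℝ, (w x) • (1 : ℂ) := by
        congr 1; funext x; rw [Complex.real_smul, mul_one]
    _ = (∫ x : ℝ, w x) • (1 : ℂ) := integral_smul_const _ _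
    _ = 1 := by rw [hw_int, one_smul]

lemma FT_supp_radius (w : ℝ → ℝ) (hw_hat : HasCompactSupport (FT fun x => (w x : ℂ))) :
    ∃ R : ℝ, 0 ≤ R ∧ ∀ u : ℝ, R < |u| → FT (fun x => (w x : ℂ)) u = 0 := by
  have hcomp : IsCompact (tsupport (FT fun x => (w x : ℂ))) := hw_hat
  obtain ⟨R, hR⟩ := hcomp.isBounded.subset_closedBall 0
  refine ⟨max R 0, le_max_right _ _, fun u hu => ?_⟩
  apply image_eq_zero_of_notMem_tsupport
  intro huK
  have := hR huK
  rw [Metric.mem_closedBall, Real.dist_eq, sub_zero] at this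
  have : |u| ≤ max R 0 := le_trans this (le_max_left _ _)
  linarith

lemma integrable_of_int_one (w : ℝ → ℝ) (hw_int : ∫ x : ℝ, w x = 1) : Integrable w := by
  by_contra h
  rw [integral_undef h] at hw_int
  exact one_ne_zero hw_int.symm


/-- Expansion of the `m`-th moment of the oscillatory term: for `supp f̂ ⊂ (−α, α)`,
`H = T^a`, and `2 ≤ m < 2a/α`, for all sufficiently large `T`,
`⟨(N_osc)^m⟩_{T,H} = Σ_{E ⊆ {1,…,m}} J(E)`. -/
theorem moment_expansion_into_J
    (fhat : ℝ → ℝ) (hf_smooth : ContDiff ℝ (⊤ : ℕ∞) fhat) (hf_supp : HasCompactSupport fhat)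
    (hf_even : ∀ x, fhat (-x) = fhat x)
    (α : ℝ) (hα : 0 < α) (hf_supp' : tsupport fhat ⊆ Set.Ioo (-α) α)
    (w : ℝ → ℝ) (hw_nonneg : ∀ x, 0 ≤ w x) (hw_int : ∫ x : ℝ, w x = 1)
    (hw_hat : HasCompactSupport (FT fun x => (w x : ℂ)))
    (a : ℝ) (ha : 0 < a) (ha' : a ≤ 1)
    (m : ℕ) (hm : 2 ≤ m) (hma : (m : ℝ) < 2 * a / α) :
    ∃ T₀ : ℝ, ∀ T : ℝ, T₀ ≤ T →
      avg w T (T ^ a) (fun τ => (Nosc fhat T τ) ^ m)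
        = ((∑ E : Finset (Fin m), J fhat T m E : ℝ) : ℂ) := by
  obtain ⟨α', hα'0, hα'α, hvan⟩ := exists_alpha' fhat α hα hf_supp hf_supp'
  obtain ⟨R, hR0, hRsupp⟩ := FT_supp_radius w hw_hat
  have hw_integrable : Integrable w := integrable_of_int_one w hw_int
  set δ : ℝ := a - m * α' / 2 with hδdef
  have hδ : 0 < δ := by
    have h1 : (m : ℝ) * α < 2 * a := by
      rw [lt_div_iff₀ hα] at hma; linarith
    have h2 : (m : ℝ) * α' < (m : ℝ) * α := by
      apply mul_lt_mul_of_pos_left hα'α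
      have : (2:ℝ) ≤ m := by exact_mod_cast hm
      linarith
    rw [hδdef]; linarith
  have hev : ∀ᶠ T : ℝ in atTop, 3 ≤ T ∧ 4 * Real.pi * (R + 1) < T ^ δ := by
    apply Filter.Eventually.and
    · exact eventually_ge_atTop 3
    · exact (tendsto_rpow_atTop hδ).eventually_gt_atTop _
  obtain ⟨T₀, hT₀⟩ := Filter.eventually_atTop.mp hev
  refine ⟨max T₀ 3, fun T hT => ?_⟩
  obtain ⟨hT3, hTδ⟩ := hT₀ T (le_trans (le_max_left _ _) hT)
  -- basic facts about T
  have hT1 : (1:ℝ) < T := by linarith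
  have hT0 : (0:ℝ) < T := by linarith
  have hL : 0 < Real.log T := Real.log_pos hT1
  set L : ℝ := Real.log T with hLdef
  set H : ℝ := T ^ a with hHdef
  have hH : 0 < H := Real.rpow_pos_of_pos hT0 a
  set N : ℕ := ⌊T ^ α'⌋₊ with hNdef
  set S : Finset ℕ := Finset.range (N + 1) with hSdef
  -- vanishing of fhat outside S
  have hvanS : ∀ n : ℕ, n ∉ S → fhat (Real.log n / L) = 0 := by
    intro n hn
    have hn' : N < n := by
      simpa [hSdef, Finset.mem_range, Nat.lt_succ_iff, not_le] using hn
    have hTn : T ^ α' < (n : ℝ) := by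
      rw [hNdef] at hn'
      exact (Nat.floor_lt (Real.rpow_nonneg hT0.le α')).mp hn'
    have hn1 : (1:ℝ) ≤ (n:ℝ) := by
      have : (1:ℝ) ≤ T ^ α' := Real.one_le_rpow hT1.le hα'0.le
      linarith
    apply hvan
    have hlogn : α' * L < Real.log n := by
      calc α' * L = Real.log (T ^ α') := (Real.log_rpow hT0 α').symm
        _ < Real.log n := Real.log_lt_log (Real.rpow_pos_of_pos hT0 α') hTn
    have hq : α' < Real.log n / L := by
      rw [lt_div_iff₀ hL]; linarith
    have : 0 ≤ Real.log n / L := by positivity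
    rw [_root_.abs_of_nonneg this]; linarith
  have hboundS : ∀ n : ℕ, n ∈ S → (n : ℝ) ≤ T ^ α' := by
    intro n hn
    have : n ≤ N := by simpa [hSdef, Finset.mem_range, Nat.lt_succ_iff] using hn
    calc (n:ℝ) ≤ (N:ℝ) := by exact_mod_cast this
      _ ≤ T ^ α' := Nat.floor_le (Real.rpow_nonneg hT0.le α')
  -- coefficients
  set c : ℕ → ℂ := fun n => ((Λ n / Real.sqrt n : ℝ) : ℂ) * ((fhat (Real.log n / L) : ℝ) : ℂ)
    with hcdef
  set Θ : (Fin m → ℕ) → (Fin m → Bool) → ℝ :=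
    fun p ε => ∑ j : Fin m, (if ε j then (1:ℝ) else -1) * Real.log (p j) with hΘdef
  -- integrand expansion
  have hInt : ∀ τ : ℝ,
      (Nosc fhat T τ) ^ m * ((w ((τ - T) / H) : ℝ) : ℂ) / (H : ℂ)
        = ∑ p ∈ Fintype.piFinset (fun _ : Fin m => S), ∑ ε : Fin m → Bool,
            ((-(1 / (L:ℂ))) ^ m * ∏ j : Fin m, c (p j)) *
              (Complex.exp (Complex.I * τ * ((Θ p ε : ℝ) : ℂ)) *
                ((w ((τ - T) / H) : ℝ) : ℂ) / (H : ℂ)) := by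
    intro τ
    have hNoscS : Nosc fhat T τ = -(1 / (L:ℂ)) * ∑ n ∈ S,
        c n * (Complex.exp (Complex.I * τ * Real.log n) +
          Complex.exp (-Complex.I * τ * Real.log n)) := by
      rw [Nosc]
      congr 1
      apply tsum_eq_sum
      intro n hn
      have h0 : fhat (Real.log n / Real.log T) = 0 := hvanS n hn
      rw [h0, Complex.ofReal_zero, mul_zero, zero_mul]
    have hD : ∀ n : ℕ, (Complex.exp (Complex.I * τ * Real.log n) +
        Complex.exp (-Complex.I * τ * Real.log n))
        = ∑ b : Bool, Complex.exp ((if b then Complex.I else -Complex.I) * τ * Real.log n) := by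
      intro n
      rw [Fintype.sum_bool]
      simp
    have hexp : ∀ (p : Fin m → ℕ) (ε : Fin m → Bool),
        (∑ j : Fin m, (if ε j then Complex.I else -Complex.I) * τ * Real.log (p j))
          = Complex.I * τ * ((Θ p ε : ℝ) : ℂ) := by
      intro p ε
      have hcast : ((Θ p ε : ℝ) : ℂ)
          = ∑ j : Fin m, (if ε j then (1:ℂ) else -1) * (Real.log (p j) : ℂ) := by
        simp only [hΘdef]
        rw [Complex.ofReal_sum]
        apply Finset.sum_congr rfl
        intro j _
        rw [Complex.ofReal_mul, apply_ite (fun x : ℝ => (x : ℂ)), Complex.ofReal_one,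
          Complex.ofReal_neg, Complex.ofReal_one]
      rw [hcast, Finset.mul_sum]
      apply Finset.sum_congr rfl
      intro j _
      by_cases hb : ε j
      · rw [if_pos hb, if_pos hb]; ring
      · rw [if_neg hb, if_neg hb]; ring
    have hBig : (Nosc fhat T τ) ^ m
        = ∑ p ∈ Fintype.piFinset (fun _ : Fin m => S), ∑ ε : Fin m → Bool,
            ((-(1 / (L:ℂ))) ^ m * ∏ j : Fin m, c (p j)) *
              Complex.exp (Complex.I * τ * ((Θ p ε : ℝ) : ℂ)) := by
      rw [hNoscS, mul_pow, Finset.sum_pow', Finset.mul_sum]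
      apply Finset.sum_congr rfl
      intro p _
      rw [Finset.prod_mul_distrib]
      have hprodD : (∏ j : Fin m, (Complex.exp (Complex.I * τ * Real.log (p j)) +
          Complex.exp (-Complex.I * τ * Real.log (p j))))
          = ∑ ε : Fin m → Bool, Complex.exp (Complex.I * τ * ((Θ p ε : ℝ) : ℂ)) := by
        calc (∏ j : Fin m, (Complex.exp (Complex.I * τ * Real.log (p j)) +
              Complex.exp (-Complex.I * τ * Real.log (p j))))
            = ∏ j : Fin m, ∑ b : Bool,
                Complex.exp ((if b then Complex.I else -Complex.I) * τ * Real.log (p j)) := by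
              apply Finset.prod_congr rfl
              intro j _
              exact hD (p j)
          _ = ∑ ε ∈ Fintype.piFinset (fun _ : Fin m => (Finset.univ : Finset Bool)),
                ∏ j : Fin m,
                  Complex.exp ((if ε j then Complex.I else -Complex.I) * τ * Real.log (p j)) :=
              Finset.prod_univ_sum _ _
          _ = ∑ ε : Fin m → Bool, ∏ j : Fin m,
                Complex.exp ((if ε j then Complex.I else -Complex.I) * τ * Real.log (p j)) := by
              rw [Fintype.piFinset_univ]
          _ = ∑ ε : Fin m → Bool, Complex.exp (Complex.I * τ * ((Θ p ε : ℝ) : ℂ)) := by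
              apply Finset.sum_congr rfl
              intro ε _
              rw [← Complex.exp_sum, hexp p ε]
      rw [hprodD, Finset.mul_sum, Finset.mul_sum]
      apply Finset.sum_congr rfl
      intro ε _
      ring
    rw [hBig, Finset.sum_mul, Finset.sum_div]
    apply Finset.sum_congr rfl
    intro p _
    rw [Finset.sum_mul, Finset.sum_div]
    apply Finset.sum_congr rfl
    intro ε _
    ring
  -- per-term evaluation
  have hterm : ∀ p ∈ Fintype.piFinset (fun _ : Fin m => S), ∀ ε : Fin m → Bool,
      (∏ j : Fin m, c (p j)) *
          (Complex.exp (Complex.I * T * ((Θ p ε : ℝ) : ℂ)) *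
            FT (fun x => (w x : ℂ)) (-(H * Θ p ε) / (2 * Real.pi)))
        = if ((∀ j, 2 ≤ p j) ∧
              ∏ j ∈ Finset.univ.filter (fun j => ε j = true), p j
                = ∏ j ∈ (Finset.univ.filter (fun j => ε j = true))ᶜ, p j)
            then ∏ j : Fin m, c (p j) else 0 := by
    intro p hp ε
    by_cases h2 : ∀ j, 2 ≤ p j
    · have hpos : ∀ j : Fin m, (0:ℝ) < (p j : ℝ) := by
        intro j
        have : (0:ℕ) < p j := lt_of_lt_of_le (by norm_num) (h2 j)
        exact_mod_cast this
      set P : ℕ := ∏ j ∈ Finset.univ.filter (fun j => ε j = true), p j with hPdef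
      set Q : ℕ := ∏ j ∈ (Finset.univ.filter (fun j => ε j = true))ᶜ, p j with hQdef
      have hP1 : 1 ≤ P := Finset.one_le_prod' (fun j _ => le_trans (by norm_num) (h2 j))
      have hQ1 : 1 ≤ Q := Finset.one_le_prod' (fun j _ => le_trans (by norm_num) (h2 j))
      have hθeq : Θ p ε = Real.log P - Real.log Q := by
        have hlogP : Real.log (P : ℝ)
            = ∑ j ∈ Finset.univ.filter (fun j => ε j = true), Real.log (p j) := by
          rw [hPdef]
          push_cast
          exact Real.log_prod (fun j _ => (hpos j).ne')
        have hlogQ : Real.log (Q : ℝ)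
            = ∑ j ∈ (Finset.univ.filter (fun j => ε j = true))ᶜ, Real.log (p j) := by
          rw [hQdef]
          push_cast
          exact Real.log_prod (fun j _ => (hpos j).ne')
        have hsplit := Finset.sum_filter_add_sum_filter_not Finset.univ
          (fun j => ε j = true) (fun j => (if ε j then (1:ℝ) else -1) * Real.log (p j))
        have h1 : ∑ j ∈ Finset.univ.filter (fun j => ε j = true),
            (if ε j then (1:ℝ) else -1) * Real.log (p j) = Real.log (P : ℝ) := by
          rw [hlogP]
          apply Finset.sum_congr rfl
          intro j hj
          rw [Finset.mem_filter] at hj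
          rw [if_pos hj.2, one_mul]
        have h1' : ∑ j ∈ Finset.univ.filter (fun j => ¬ ε j = true),
            (if ε j then (1:ℝ) else -1) * Real.log (p j) = -Real.log (Q : ℝ) := by
          rw [hlogQ, Finset.compl_filter, ← Finset.sum_neg_distrib]
          apply Finset.sum_congr rfl
          intro j hj
          rw [Finset.mem_filter] at hj
          rw [if_neg hj.2, neg_one_mul]
        have hΘval : Θ p ε = ∑ j : Fin m,
            (if ε j then (1:ℝ) else -1) * Real.log (p j) := rfl
        rw [hΘval, ← hsplit, h1, h1']
        ring
      by_cases hPQ : P = Q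
      · rw [if_pos ⟨h2, hPQ⟩]
        have hθ0 : Θ p ε = 0 := by rw [hθeq, hPQ, sub_self]
        rw [hθ0, Complex.ofReal_zero, mul_zero, Complex.exp_zero, mul_zero, neg_zero,
          zero_div, FT_zero w hw_int, one_mul, mul_one]
      · rw [if_neg (by rintro ⟨-, hc⟩; exact hPQ hc)]
        have hgap : 1 / (2 * ((min P Q : ℕ) : ℝ)) ≤ |Θ p ε| := by
          rw [hθeq, Nat.cast_min]; exact log_gap P Q hP1 hQ1 hPQ
        have hminpos : (0:ℝ) < ((min P Q : ℕ) : ℝ) := by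
          have : 1 ≤ min P Q := le_min hP1 hQ1
          exact_mod_cast lt_of_lt_of_le (by norm_num) this
        have hmin : ((min P Q : ℕ) : ℝ) ≤ T ^ (α' * (m:ℝ) / 2) := by
          have hcast : ((P:ℝ) * (Q:ℝ)) = ∏ j : Fin m, (p j : ℝ) := by
            rw [hPdef, hQdef]
            push_cast
            rw [Finset.prod_mul_prod_compl]
          have hprodle : ∏ j : Fin m, (p j : ℝ) ≤ T ^ (α' * (m:ℝ)) := by
            calc ∏ j : Fin m, (p j : ℝ) ≤ ∏ _j : Fin m, T ^ α' := by
                  apply Finset.prod_le_prod (fun j _ => (hpos j).le)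
                  intro j _
                  exact hboundS (p j) ((Fintype.mem_piFinset.mp hp) j)
              _ = (T ^ α') ^ m := by rw [Finset.prod_const, Finset.card_univ, Fintype.card_fin]
              _ = T ^ (α' * (m:ℝ)) := by
                  rw [← Real.rpow_natCast (T ^ α') m, ← Real.rpow_mul hT0.le]
          have hsq : ((min P Q : ℕ) : ℝ) ^ 2 ≤ (T ^ (α' * (m:ℝ) / 2)) ^ 2 := by
            have hm1 : ((min P Q : ℕ) : ℝ) ≤ (P:ℝ) := by exact_mod_cast min_le_left P Q
            have hm2 : ((min P Q : ℕ) : ℝ) ≤ (Q:ℝ) := by exact_mod_cast min_le_right P Q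
            have hsq2 : (T ^ (α' * (m:ℝ) / 2)) ^ 2 = T ^ (α' * (m:ℝ)) := by
              rw [← Real.rpow_natCast (T ^ (α' * (m:ℝ) / 2)) 2, ← Real.rpow_mul hT0.le]
              norm_num
            rw [hsq2]
            nlinarith [hcast, hprodle, hminpos.le]
          have := Real.sqrt_le_sqrt hsq
          rwa [Real.sqrt_sq hminpos.le, Real.sqrt_sq (Real.rpow_nonneg hT0.le _)] at this
        have hgt : R < |(-(H * Θ p ε)) / (2 * Real.pi)| := by
          have h2π : (0:ℝ) < 2 * Real.pi := by positivity
          have habs : |(-(H * Θ p ε)) / (2 * Real.pi)| = H * |Θ p ε| / (2 * Real.pi) := by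
            rw [abs_div, abs_neg, abs_mul, abs_of_pos hH, abs_of_pos h2π]
          rw [habs]
          have h3 : H * (1 / (2 * ((min P Q : ℕ) : ℝ))) ≤ H * |Θ p ε| :=
            mul_le_mul_of_nonneg_left hgap hH.le
          have key : T ^ δ * ((min P Q : ℕ) : ℝ) ≤ T ^ a := by
            calc T ^ δ * ((min P Q : ℕ) : ℝ) ≤ T ^ δ * T ^ (α' * (m:ℝ) / 2) :=
                  mul_le_mul_of_nonneg_left hmin (Real.rpow_nonneg hT0.le _)
              _ = T ^ (δ + α' * (m:ℝ) / 2) := (Real.rpow_add hT0 _ _).symm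
              _ = T ^ a := by rw [hδdef]; ring_nf
          have h4 : T ^ δ / 2 ≤ H * (1 / (2 * ((min P Q : ℕ) : ℝ))) := by
            rw [hHdef]
            rw [div_le_iff₀ (by norm_num : (0:ℝ) < 2)]
            have hrhs : T ^ a * (1 / (2 * ((min P Q : ℕ) : ℝ))) * 2
                = T ^ a / ((min P Q : ℕ) : ℝ) := by field_simp
            rw [hrhs, le_div_iff₀ hminpos]
            exact key
          have h5 : R + 1 < T ^ δ / (4 * Real.pi) := by
            rw [lt_div_iff₀ (by positivity : (0:ℝ) < 4 * Real.pi)]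
            calc (R + 1) * (4 * Real.pi) = 4 * Real.pi * (R + 1) := by ring
              _ < T ^ δ := hTδ
          have h6 : T ^ δ / (4 * Real.pi) = (T ^ δ / 2) / (2 * Real.pi) := by ring
          have h7 : (T ^ δ / 2) / (2 * Real.pi) ≤ H * |Θ p ε| / (2 * Real.pi) := by
            exact (div_le_div_iff_of_pos_right h2π).mpr (by linarith)
          linarith
        rw [hRsupp _ hgt, mul_zero, mul_zero]
    · rw [if_neg (fun hc => h2 hc.1)]
      push_neg at h2
      obtain ⟨j, hj⟩ := h2
      have hΛ : Λ (p j) = 0 := by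
        interval_cases h : p j
        · exact ArithmeticFunction.map_zero
        · exact ArithmeticFunction.vonMangoldt_apply_one
      have hc0 : c (p j) = 0 := by
        simp only [hcdef, hΛ]
        norm_num
      rw [Finset.prod_eq_zero (Finset.mem_univ j) hc0, zero_mul]
  -- J as finite sum
  have hJ : ∀ E : Finset (Fin m), ((J fhat T m E : ℝ) : ℂ)
      = (-(1 / (L:ℂ))) ^ m * ∑ p ∈ Fintype.piFinset (fun _ : Fin m => S),
          (if ((∀ j, 2 ≤ p j) ∧ ∏ j ∈ E, p j = ∏ j ∈ Eᶜ, p j)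
            then ∏ j : Fin m, c (p j) else 0) := by
    intro E
    have hts : (∑' n : {n : Fin m → ℕ // (∀ j, 2 ≤ n j) ∧ ∏ j ∈ E, n j = ∏ j ∈ Eᶜ, n j},
        ∏ j : Fin m, Λ (n.1 j) / Real.sqrt (n.1 j) * fhat (Real.log (n.1 j) / Real.log T))
        = ∑ p ∈ Fintype.piFinset (fun _ : Fin m => S),
            (if ((∀ j, 2 ≤ p j) ∧ ∏ j ∈ E, p j = ∏ j ∈ Eᶜ, p j)
              then ∏ j : Fin m, Λ (p j) / Real.sqrt (p j) * fhat (Real.log (p j) / Real.log T)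
              else 0) := by
      have h0 : (∑' n : {n : Fin m → ℕ // (∀ j, 2 ≤ n j) ∧ ∏ j ∈ E, n j = ∏ j ∈ Eᶜ, n j},
          ∏ j : Fin m, Λ (n.1 j) / Real.sqrt (n.1 j) * fhat (Real.log (n.1 j) / Real.log T))
          = ∑' n : Fin m → ℕ,
              Set.indicator {n : Fin m → ℕ | (∀ j, 2 ≤ n j) ∧ ∏ j ∈ E, n j = ∏ j ∈ Eᶜ, n j}
              (fun n => ∏ j : Fin m, Λ (n j) / Real.sqrt (n j) *
                fhat (Real.log (n j) / Real.log T)) n :=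
        tsum_subtype {n : Fin m → ℕ | (∀ j, 2 ≤ n j) ∧ ∏ j ∈ E, n j = ∏ j ∈ Eᶜ, n j}
          (fun n => ∏ j : Fin m, Λ (n j) / Real.sqrt (n j) * fhat (Real.log (n j) / Real.log T))
      rw [h0, tsum_eq_sum (s := Fintype.piFinset (fun _ : Fin m => S)) ?_]
      · apply Finset.sum_congr rfl
        intro p _
        by_cases hP : (∀ j, 2 ≤ p j) ∧ ∏ j ∈ E, p j = ∏ j ∈ Eᶜ, p j
        · rw [Set.indicator_of_mem (by exact hP), if_pos hP]
        · rw [Set.indicator_of_notMem (by exact hP), if_neg hP]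
      · intro n hn
        rw [Fintype.mem_piFinset] at hn
        push_neg at hn
        obtain ⟨j, hj⟩ := hn
        rw [Set.indicator_apply]
        split
        · apply Finset.prod_eq_zero (Finset.mem_univ j)
          rw [hvanS (n j) hj, mul_zero]
        · rfl
    rw [J, hts, Complex.ofReal_mul, Complex.ofReal_pow, Complex.ofReal_neg,
      Complex.ofReal_div, Complex.ofReal_one, Complex.ofReal_sum]
    rw [← hLdef]
    congr 1
    apply Finset.sum_congr rfl
    intro p _
    rw [apply_ite (fun x : ℝ => (x : ℂ)), Complex.ofReal_zero]
    by_cases h : (∀ j, 2 ≤ p j) ∧ ∏ j ∈ E, p j = ∏ j ∈ Eᶜ, p j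
    · rw [if_pos h, if_pos h, Complex.ofReal_prod]
      apply Finset.prod_congr rfl
      intro j _
      rw [Complex.ofReal_mul]
    · rw [if_neg h, if_neg h]
  -- integrability of base integrand
  have hIble : ∀ θ : ℝ, Integrable (fun τ : ℝ =>
      Complex.exp (Complex.I * τ * (θ:ℂ)) * ((w ((τ - T) / H) : ℝ) : ℂ) / (H : ℂ)) := by
    intro θ
    have h1 : Integrable (fun τ : ℝ => w ((τ - T) / H)) :=
      (hw_integrable.comp_div hH.ne').comp_sub_right T
    have h2 : Integrable (fun τ : ℝ => ((w ((τ - T) / H) : ℝ) : ℂ)) := h1.ofReal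
    have h3 : Integrable (fun τ : ℝ =>
        Complex.exp (Complex.I * τ * (θ:ℂ)) * ((w ((τ - T) / H) : ℝ) : ℂ)) := by
      apply h2.bdd_mul (c := 1)
      · exact (((continuous_const.mul Complex.continuous_ofReal).mul
          continuous_const).cexp).aestronglyMeasurable
      · refine Filter.Eventually.of_forall (fun τ => ?_)
        rw [show Complex.I * τ * (θ:ℂ) = ((τ * θ : ℝ):ℂ) * Complex.I by push_cast; ring]
        rw [Complex.norm_exp_ofReal_mul_I]
    exact h3.div_const _
  -- compute the average
  have key : avg w T H (fun τ => (Nosc fhat T τ) ^ m)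
      = ∑ p ∈ Fintype.piFinset (fun _ : Fin m => S), ∑ ε : Fin m → Bool,
          ((-(1 / (L:ℂ))) ^ m * ∏ j : Fin m, c (p j)) *
            (Complex.exp (Complex.I * T * ((Θ p ε : ℝ) : ℂ)) *
              FT (fun x => (w x : ℂ)) (-(H * Θ p ε) / (2 * Real.pi))) := by
    rw [avg]
    rw [MeasureTheory.integral_congr_ae (Filter.Eventually.of_forall hInt)]
    rw [MeasureTheory.integral_finset_sum _ (fun p _ => ?_)]
    · apply Finset.sum_congr rfl
      intro p _
      rw [MeasureTheory.integral_finset_sum _ (fun ε _ => ((hIble (Θ p ε)).const_mul _))]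
      apply Finset.sum_congr rfl
      intro ε _
      rw [MeasureTheory.integral_const_mul, avg_exp_eq w T H (Θ p ε) hH]
    · exact integrable_finset_sum _ (fun ε _ => ((hIble (Θ p ε)).const_mul _))
  rw [key]
  -- evaluate each term and reindex
  calc ∑ p ∈ Fintype.piFinset (fun _ : Fin m => S), ∑ ε : Fin m → Bool,
          ((-(1 / (L:ℂ))) ^ m * ∏ j : Fin m, c (p j)) *
            (Complex.exp (Complex.I * T * ((Θ p ε : ℝ) : ℂ)) *
              FT (fun x => (w x : ℂ)) (-(H * Θ p ε) / (2 * Real.pi)))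
      = ∑ ε : Fin m → Bool, ∑ p ∈ Fintype.piFinset (fun _ : Fin m => S),
          (-(1 / (L:ℂ))) ^ m *
            (if ((∀ j, 2 ≤ p j) ∧
              ∏ j ∈ Finset.univ.filter (fun j => ε j = true), p j
                = ∏ j ∈ (Finset.univ.filter (fun j => ε j = true))ᶜ, p j)
            then ∏ j : Fin m, c (p j) else 0) := by
        rw [Finset.sum_comm]
        apply Finset.sum_congr rfl; intro ε _
        apply Finset.sum_congr rfl; intro p hp
        rw [mul_assoc, hterm p hp ε]
    _ = ∑ ε : Fin m → Bool,
          ((J fhat T m (Finset.univ.filter (fun j => ε j = true)) : ℝ) : ℂ) := by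
        apply Finset.sum_congr rfl; intro ε _
        rw [hJ, Finset.mul_sum]
    _ = ((∑ E : Finset (Fin m), J fhat T m E : ℝ) : ℂ) := by
        push_cast
        apply Fintype.sum_equiv
          ⟨fun ε => Finset.univ.filter (fun j => ε j = true),
           fun E => fun j => decide (j ∈ E),
           fun ε => by funext j; simp,
           fun E => by ext j; simp⟩
        intro ε; rfl
end
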